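/- arXiv:2510.06497 — 5 statements merged into one kernel-verified Lean document; each statement's English description precedes it below -/
import Mathlib

section
/- Let S be an inverse semigroup with zero, X a filter on S (with respect to the natural partial order), and s ∈ S such that 0 ∉ sX. Then the upward closure (sX)↑ of sX is a filter on S. -/
/-- An element is idempotent. -/
def IsIdemE {S : Type*} [Mul S] (e : S) : Prop := e * e = e

/-- `S` is an inverse semigroup with zero, `inv` giving the unique inverse of each element. -/
structure IsInvSemigroupZ (S : Type*) [Semigroup S] [Zero S] (inv : S → S) : Prop where
  zero_mul : ∀ s : S, 0 * s = 0
  mul_zero : ∀ s : S, s * 0 = 0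
  mul_inv_mul : ∀ s : S, s * inv s * s = s
  inv_mul_inv : ∀ s : S, inv s * s * inv s = inv s
  inv_unique : ∀ s t : S, s * t * s = s → t * s * t = t → t = inv s

/-- The natural partial order on an inverse semigroup: `s ≤ t` iff `s = t * u` for an idempotent `u`. -/
def natle {S : Type*} [Semigroup S] (s t : S) : Prop := ∃ u : S, IsIdemE u ∧ s = t * u

/-- A `Γ`-grading on `S` (the value of `deg` at `0` is irrelevant). -/
def IsGradingZ {S : Type*} [Semigroup S] [Zero S] {Γ : Type*} [Group Γ] (deg : S → Γ) : Prop :=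
  ∀ s t : S, s * t ≠ 0 → deg (s * t) = deg s * deg t

/-- Membership in the component `S_α = deg⁻¹(α) ∪ {0}`. -/
def memGradeZ {S : Type*} [Zero S] {Γ : Type*} (deg : S → Γ) (α : Γ) (s : S) : Prop :=
  s = 0 ∨ deg s = α

/-- `s` and `t` are compatible: `s⁻¹t` and `st⁻¹` are idempotent. -/
def CompatZ {S : Type*} [Semigroup S] (inv : S → S) (s t : S) : Prop :=
  IsIdemE (inv s * t) ∧ IsIdemE (s * inv t)

/-- `s` and `t` are orthogonal: `s⁻¹t = 0 = st⁻¹`. -/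
def OrthogZ {S : Type*} [Semigroup S] [Zero S] (inv : S → S) (s t : S) : Prop :=
  inv s * t = 0 ∧ s * inv t = 0

/-- `j` is the join (least upper bound) of `A` in the natural partial order. -/
def IsJoinZ {S : Type*} [Semigroup S] (A : Set S) (j : S) : Prop :=
  (∀ a ∈ A, natle a j) ∧ ∀ b : S, (∀ a ∈ A, natle a b) → natle j b

/-- `m` is the meet (greatest lower bound) of `A` in the natural partial order. -/
def IsMeetZ {S : Type*} [Semigroup S] (A : Set S) (m : S) : Prop :=
  (∀ a ∈ A, natle m a) ∧ ∀ b : S, (∀ a ∈ A, natle b a) → natle b m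

/-- A filter on `S` with respect to the natural partial order. -/
structure IsFilterZ {S : Type*} [Semigroup S] [Zero S] (X : Set S) : Prop where
  nonempty : X.Nonempty
  directed : ∀ x ∈ X, ∀ y ∈ X, ∃ z ∈ X, natle z x ∧ natle z y
  upward : ∀ x ∈ X, ∀ y : S, natle x y → y ∈ X
  zero_not_mem : (0 : S) ∉ X

/-- An ultrafilter on `S`: a maximal filter. -/
def IsUltraZ {S : Type*} [Semigroup S] [Zero S] (X : Set S) : Prop :=
  IsFilterZ X ∧ ∀ Y : Set S, IsFilterZ Y → X ⊆ Y → Y = X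

/-- The upward closure of a subset. -/
def upsetZ {S : Type*} [Semigroup S] (Y : Set S) : Set S := {x : S | ∃ y ∈ Y, natle y x}

/-- The set of ultrafilters on `S` containing `s`. -/
def USetZ {S : Type*} [Semigroup S] [Zero S] (s : S) : Set (Set S) :=
  {X : Set S | IsUltraZ X ∧ s ∈ X}

section Aux
variable {S : Type*} [Semigroup S] [Zero S] (inv : S → S)

lemma isIdem_inv_mul (hS : IsInvSemigroupZ S inv) (x : S) : IsIdemE (inv x * x) := by
  show (inv x * x) * (inv x * x) = inv x * x
  calc (inv x * x) * (inv x * x) = inv x * (x * inv x * x) := by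
        simp only [mul_assoc]
    _ = inv x * x := by rw [hS.mul_inv_mul]

lemma natle_refl (hS : IsInvSemigroupZ S inv) (x : S) : natle x x :=
  ⟨inv x * x, isIdem_inv_mul inv hS x, by rw [← mul_assoc, hS.mul_inv_mul]⟩

lemma isIdem_mul (hS : IsInvSemigroupZ S inv) {e f : S}
    (he : IsIdemE e) (hf : IsIdemE f) : IsIdemE (e * f) := by
  set x := e * f with hx
  set y := f * inv x * e with hy
  have hee : ∀ t : S, e * (e * t) = e * t := fun t => by rw [← mul_assoc, he]
  have hff : ∀ t : S, f * (f * t) = f * t := fun t => by rw [← mul_assoc, hf]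
  have h1 : x * y * x = x := by
    have : x * y * x = e * (f * (f * (inv x * (e * (e * f))))) := by
      simp only [hx, hy, mul_assoc]
    rw [this, hee, hff, ← mul_assoc, ← mul_assoc, ← hx]
    exact hS.mul_inv_mul x
  have h2 : y * x * y = y := by
    have : y * x * y = f * (inv x * (e * (e * (f * (f * (inv x * e)))))) := by
      simp only [hx, hy, mul_assoc]
    rw [this, hee, hff]
    have : f * (inv x * (e * (f * (inv x * e)))) = f * ((inv x * (e * f) * inv x) * e) := by
      simp only [mul_assoc]
    rw [this, ← hx, hS.inv_mul_inv, hy, mul_assoc]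
  have hyx : y = inv x := hS.inv_unique x y h1 h2
  have hyy : IsIdemE y := by
    show y * y = y
    have : y * y = f * ((inv x * (e * f) * inv x) * e) := by
      simp only [hx, hy, mul_assoc]
    rw [← hx, hS.inv_mul_inv] at this
    rw [this, hy, mul_assoc]
  have hinvinv : x = inv (inv x) :=
    hS.inv_unique (inv x) x (hS.inv_mul_inv x) (hS.mul_inv_mul x)
  have : x = y := by
    rw [hinvinv, ← hyx]
    exact (hS.inv_unique y y (by rw [hyy, hyy]) (by rw [hyy, hyy])).symm
  rw [this]; exact hyy

lemma natle_trans (hS : IsInvSemigroupZ S inv) {x y z : S}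
    (hxy : natle x y) (hyz : natle y z) : natle x z := by
  obtain ⟨e, he, hxe⟩ := hxy
  obtain ⟨f, hf, hyf⟩ := hyz
  exact ⟨f * e, isIdem_mul inv hS hf he, by rw [hxe, hyf, mul_assoc]⟩

lemma natle_mul_left (s : S) {x y : S} (h : natle x y) : natle (s * x) (s * y) := by
  obtain ⟨e, he, hxe⟩ := h
  exact ⟨e, he, by rw [hxe, mul_assoc]⟩

end Aux

theorem upset_smul_filter
    {S : Type*} [Semigroup S] [Zero S]
    (inv : S → S) (hS : IsInvSemigroupZ S inv)
    {X : Set S} (hX : IsFilterZ X) (s : S)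
    (h0 : (0 : S) ∉ (fun x => s * x) '' X) :
    IsFilterZ (upsetZ ((fun x => s * x) '' X)) := by
  constructor
  · obtain ⟨x, hx⟩ := hX.nonempty
    exact ⟨s * x, ⟨s * x, ⟨x, hx, rfl⟩, natle_refl inv hS _⟩⟩
  · rintro a ⟨_, ⟨x, hx, rfl⟩, hax⟩ b ⟨_, ⟨y, hy, rfl⟩, hby⟩
    obtain ⟨z, hz, hzx, hzy⟩ := hX.directed x hx y hy
    refine ⟨s * z, ⟨s * z, ⟨z, hz, rfl⟩, natle_refl inv hS _⟩, ?_, ?_⟩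
    · exact natle_trans inv hS (natle_mul_left s hzx) hax
    · exact natle_trans inv hS (natle_mul_left s hzy) hby
  · rintro a ⟨w, hw, hwa⟩ b hab
    exact ⟨w, hw, natle_trans inv hS hwa hab⟩
  · rintro ⟨w, hw, e, he, h0e⟩
    rw [h0e, hS.zero_mul] at hw
    exact h0 hw
end

section
/- Let S be an inverse semigroup with zero and X an ultrafilter on S (a maximal filter in the natural partial order). Then (X⁻¹X)↑ is an ultrafilter on S, where X⁻¹X = {x⁻¹y : x, y ∈ X}. -/
section Aux
variable {S : Type*} [Semigroup S] [Zero S] {i : S → S}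

lemma z_inv_inv (hS : IsInvSemigroupZ S i) (s : S) : i (i s) = s :=
  (hS.inv_unique (i s) s (hS.inv_mul_inv s) (hS.mul_inv_mul s)).symm

lemma z_idem_inv_mul (hS : IsInvSemigroupZ S i) (s : S) : IsIdemE (i s * s) := by
  show i s * s * (i s * s) = i s * s
  calc i s * s * (i s * s) = (i s * s * i s) * s := by simp only [mul_assoc]
    _ = i s * s := by rw [hS.inv_mul_inv]

lemma z_idem_mul_inv (hS : IsInvSemigroupZ S i) (s : S) : IsIdemE (s * i s) := by
  show s * i s * (s * i s) = s * i s
  calc s * i s * (s * i s) = (s * i s * s) * i s := by simp only [mul_assoc]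
    _ = s * i s := by rw [hS.mul_inv_mul]

lemma z_inv_idem (hS : IsInvSemigroupZ S i) {e : S} (he : IsIdemE e) : i e = e :=
  (hS.inv_unique e e (by rw [he, he]) (by rw [he, he])).symm

lemma z_idem_mul (hS : IsInvSemigroupZ S i) {e f : S} (he : IsIdemE e) (hf : IsIdemE f) :
    IsIdemE (e * f) := by
  set x := i (e * f) with hx
  have h1 : e * f * x * (e * f) = e * f := hS.mul_inv_mul (e * f)
  have h2 : x * (e * f) * x = x := hS.inv_mul_inv (e * f)
  have h2e : x * (e * (f * (x * e))) = x * e := by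
    have := congrArg (· * e) h2
    simpa only [mul_assoc] using this
  have c1 : e * f * (f * x * e) * (e * f) = e * f := by
    have h : e * f * (f * x * e) * (e * f) = e * (f * f) * x * (e * e) * f := by
      simp only [mul_assoc]
    rw [h, hf, he]
    simpa only [mul_assoc] using h1
  have c2 : f * x * e * (e * f) * (f * x * e) = f * x * e := by
    have h : f * x * e * (e * f) * (f * x * e) = f * (x * (e * e) * (f * f) * (x * e)) := by
      simp only [mul_assoc]
    rw [h, he, hf]
    simp only [mul_assoc]
    rw [h2e]
  have hfxe : f * x * e = x := hS.inv_unique _ _ c1 c2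
  have hxx : IsIdemE x := by
    show x * x = x
    rw [← hfxe]
    have h : f * x * e * (f * x * e) = f * (x * (e * (f * (x * e)))) := by
      simp only [mul_assoc]
    rw [h, h2e]
    simp only [mul_assoc]
  have hef : e * f = x := by
    have h3 : e * f = i x := hS.inv_unique x (e * f) h2 h1
    rw [h3, z_inv_idem hS hxx]
  show e * f * (e * f) = e * f
  rw [hef]; exact hxx

lemma z_idem_comm (hS : IsInvSemigroupZ S i) {e f : S} (he : IsIdemE e) (hf : IsIdemE f) :
    e * f = f * e := by
  have hef := z_idem_mul hS he hf
  have hfe := z_idem_mul hS hf he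
  have c1 : e * f * (f * e) * (e * f) = e * f := by
    have h : e * f * (f * e) * (e * f) = e * (f * f) * (e * e) * f := by
      simp only [mul_assoc]
    rw [h, hf, he]
    have hef' : e * f * (e * f) = e * f := hef
    simpa only [mul_assoc] using hef'
  have c2 : f * e * (e * f) * (f * e) = f * e := by
    have h : f * e * (e * f) * (f * e) = f * (e * e) * (f * f) * e := by
      simp only [mul_assoc]
    rw [h, he, hf]
    have hfe' : f * e * (f * e) = f * e := hfe
    simpa only [mul_assoc] using hfe'
  have h4 : f * e = i (e * f) := hS.inv_unique (e * f) (f * e) c1 c2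
  rw [h4, z_inv_idem hS hef]

lemma z_idem_conj (hS : IsInvSemigroupZ S i) {f : S} (hf : IsIdemE f) (a : S) :
    IsIdemE (a * f * i a) := by
  have hcomm : (i a * a) * f = f * (i a * a) := z_idem_comm hS (z_idem_inv_mul hS a) hf
  show a * f * i a * (a * f * i a) = a * f * i a
  calc a * f * i a * (a * f * i a)
      = a * f * ((i a * a) * f) * i a := by simp only [mul_assoc]
    _ = a * f * (f * (i a * a)) * i a := by rw [hcomm]
    _ = a * (f * f) * (i a * a * i a) := by simp only [mul_assoc]
    _ = a * f * (i a * a * i a) := by rw [hf]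
    _ = a * f * i a := by rw [hS.inv_mul_inv]

lemma z_inv_mul (hS : IsInvSemigroupZ S i) (s t : S) : i (s * t) = i t * i s := by
  have hc : (t * i t) * (i s * s) = (i s * s) * (t * i t) :=
    z_idem_comm hS (z_idem_mul_inv hS t) (z_idem_inv_mul hS s)
  symm
  apply hS.inv_unique
  · calc s * t * (i t * i s) * (s * t)
        = s * ((t * i t) * (i s * s)) * t := by simp only [mul_assoc]
      _ = s * ((i s * s) * (t * i t)) * t := by rw [hc]
      _ = (s * i s * s) * (t * i t * t) := by simp only [mul_assoc]
      _ = s * t := by rw [hS.mul_inv_mul, hS.mul_inv_mul]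
  · calc i t * i s * (s * t) * (i t * i s)
        = i t * ((i s * s) * (t * i t)) * i s := by simp only [mul_assoc]
      _ = i t * ((t * i t) * (i s * s)) * i s := by rw [hc]
      _ = (i t * t * i t) * (i s * s * i s) := by simp only [mul_assoc]
      _ = i t * i s := by rw [hS.inv_mul_inv, hS.inv_mul_inv]

lemma z_natle_refl (hS : IsInvSemigroupZ S i) (s : S) : natle s s :=
  ⟨i s * s, z_idem_inv_mul hS s, by rw [← mul_assoc, hS.mul_inv_mul]⟩

lemma z_natle_trans (hS : IsInvSemigroupZ S i) {s t r : S} (h1 : natle s t) (h2 : natle t r) :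
    natle s r := by
  obtain ⟨u, hu, hsu⟩ := h1
  obtain ⟨v, hv, htv⟩ := h2
  exact ⟨v * u, z_idem_mul hS hv hu, by rw [hsu, htv, mul_assoc]⟩

lemma z_natle_zero (hS : IsInvSemigroupZ S i) {a : S} (h : natle a 0) : a = 0 := by
  obtain ⟨u, _, h⟩ := h
  rw [h, hS.zero_mul]

lemma z_natle_left (hS : IsInvSemigroupZ S i) {s t : S} (h : natle s t) :
    ∃ e : S, IsIdemE e ∧ s = e * t := by
  obtain ⟨u, hu, hst⟩ := h
  refine ⟨s * i s, z_idem_mul_inv hS s, ?_⟩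
  have hinv : i s = u * i t := by
    rw [hst, z_inv_mul hS, z_inv_idem hS hu]
  have hcomm : u * (i t * t) = (i t * t) * u := z_idem_comm hS hu (z_idem_inv_mul hS t)
  have key : s * i s * t = s := by
    calc s * i s * t = t * u * (u * i t) * t := by rw [hinv, hst]
      _ = t * (u * u) * (i t * t) := by simp only [mul_assoc]
      _ = t * u * (i t * t) := by rw [hu]
      _ = t * ((i t * t) * u) := by rw [mul_assoc]; rw [hcomm]
      _ = (t * i t * t) * u := by simp only [mul_assoc]
      _ = t * u := by rw [hS.mul_inv_mul]
      _ = s := hst.symm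
  exact key.symm

lemma z_natle_of_left (hS : IsInvSemigroupZ S i) {e : S} (he : IsIdemE e) (a : S) :
    natle (e * a) a := by
  refine ⟨i a * e * a, ?_, ?_⟩
  · have h := z_idem_conj hS he (i a)
    rwa [z_inv_inv hS] at h
  · have hcomm : (a * i a) * e = e * (a * i a) := z_idem_comm hS (z_idem_mul_inv hS a) he
    calc e * a = e * (a * i a * a) := by rw [hS.mul_inv_mul]
      _ = (e * (a * i a)) * a := by simp only [mul_assoc]
      _ = ((a * i a) * e) * a := by rw [hcomm]
      _ = a * (i a * e * a) := by simp only [mul_assoc]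

lemma z_natle_mul (hS : IsInvSemigroupZ S i) {s t s' t' : S}
    (h : natle s t) (h' : natle s' t') : natle (s * s') (t * t') := by
  obtain ⟨e, he, hs⟩ := z_natle_left hS h
  obtain ⟨u, hu, hs'⟩ := h'
  obtain ⟨v, hv, hev⟩ := z_natle_of_left hS he (t * t')
  refine ⟨v * u, z_idem_mul hS hv hu, ?_⟩
  calc s * s' = e * t * (t' * u) := by rw [hs, hs']
    _ = (e * (t * t')) * u := by simp only [mul_assoc]
    _ = ((t * t') * v) * u := by rw [hev]
    _ = (t * t') * (v * u) := by rw [mul_assoc]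

lemma z_natle_inv (hS : IsInvSemigroupZ S i) {s t : S} (h : natle s t) :
    natle (i s) (i t) := by
  obtain ⟨u, hu, hst⟩ := h
  have h2 : i s = u * i t := by rw [hst, z_inv_mul hS, z_inv_idem hS hu]
  rw [h2]; exact z_natle_of_left hS hu (i t)

lemma z_nonzero_invmul (hS : IsInvSemigroupZ S i) {w : S} (hw : w ≠ 0) : i w * w ≠ 0 := by
  intro h0
  apply hw
  have h := hS.mul_inv_mul w
  rw [mul_assoc, h0, hS.mul_zero] at h
  exact h.symm

end Aux

theorem upset_invmul_ultrafilter
    {S : Type*} [Semigroup S] [Zero S]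
    (inv : S → S) (hS : IsInvSemigroupZ S inv)
    {X : Set S} (hX : IsUltraZ X) :
    IsUltraZ (upsetZ {z : S | ∃ x ∈ X, ∃ y ∈ X, z = inv x * y}) := by
  obtain ⟨hXf, hXmax⟩ := hX
  have hne0 : ∀ z ∈ X, z ≠ 0 := fun z hz h0 => hXf.zero_not_mem (h0 ▸ hz)
  have key1 : ∀ x ∈ X, ∀ y ∈ X, ∃ w ∈ X, natle (inv w * w) (inv x * y) := by
    intro x hx y hy
    obtain ⟨w, hw, hwx, hwy⟩ := hXf.directed x hx y hy
    exact ⟨w, hw, z_natle_mul hS (z_natle_inv hS hwx) hwy⟩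
  constructor
  · constructor
    · obtain ⟨x, hx⟩ := hXf.nonempty
      exact ⟨inv x * x, ⟨inv x * x, ⟨x, hx, x, hx, rfl⟩, z_natle_refl hS _⟩⟩
    · rintro a ⟨z1, ⟨x1, hx1, y1, hy1, rfl⟩, hza⟩ b ⟨z2, ⟨x2, hx2, y2, hy2, rfl⟩, hzb⟩
      obtain ⟨w1, hw1, hw1x, hw1y⟩ := hXf.directed x1 hx1 y1 hy1
      obtain ⟨w2, hw2, hw2x, hw2y⟩ := hXf.directed x2 hx2 y2 hy2
      obtain ⟨w, hw, hww1, hww2⟩ := hXf.directed w1 hw1 w2 hw2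
      refine ⟨inv w * w, ⟨inv w * w, ⟨w, hw, w, hw, rfl⟩, z_natle_refl hS _⟩, ?_, ?_⟩
      · exact z_natle_trans hS
          (z_natle_mul hS (z_natle_inv hS (z_natle_trans hS hww1 hw1x))
            (z_natle_trans hS hww1 hw1y)) hza
      · exact z_natle_trans hS
          (z_natle_mul hS (z_natle_inv hS (z_natle_trans hS hww2 hw2x))
            (z_natle_trans hS hww2 hw2y)) hzb
    · rintro a ⟨z, hzB, hza⟩ b hab
      exact ⟨z, hzB, z_natle_trans hS hza hab⟩
    · rintro ⟨z, ⟨x, hx, y, hy, rfl⟩, h0⟩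
      have hxy0 : inv x * y = 0 := z_natle_zero hS h0
      obtain ⟨w, hw, hle⟩ := key1 x hx y hy
      rw [hxy0] at hle
      exact z_nonzero_invmul hS (hne0 w hw) (z_natle_zero hS hle)
  · intro Y hY hEY
    have hixxY : ∀ x ∈ X, inv x * x ∈ Y := by
      intro x hx
      exact hEY ⟨inv x * x, ⟨x, hx, x, hx, rfl⟩, z_natle_refl hS _⟩
    -- the auxiliary filter W
    have hWf : IsFilterZ (upsetZ {w : S | ∃ x ∈ X, ∃ y ∈ Y, w = x * y}) := by
      constructor
      · obtain ⟨x, hx⟩ := hXf.nonempty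
        obtain ⟨y, hy⟩ := hY.nonempty
        exact ⟨x * y, ⟨x * y, ⟨x, hx, y, hy, rfl⟩, z_natle_refl hS _⟩⟩
      · rintro a ⟨w1, ⟨x1, hx1, y1, hy1, rfl⟩, hwa⟩ b ⟨w2, ⟨x2, hx2, y2, hy2, rfl⟩, hwb⟩
        obtain ⟨x, hx, hxx1, hxx2⟩ := hXf.directed x1 hx1 x2 hx2
        obtain ⟨y, hy, hyy1, hyy2⟩ := hY.directed y1 hy1 y2 hy2
        refine ⟨x * y, ⟨x * y, ⟨x, hx, y, hy, rfl⟩, z_natle_refl hS _⟩, ?_, ?_⟩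
        · exact z_natle_trans hS (z_natle_mul hS hxx1 hyy1) hwa
        · exact z_natle_trans hS (z_natle_mul hS hxx2 hyy2) hwb
      · rintro a ⟨w, hwB, hwa⟩ b hab
        exact ⟨w, hwB, z_natle_trans hS hwa hab⟩
      · rintro ⟨w, ⟨x, hx, y, hy, rfl⟩, h0⟩
        have hxy0 : x * y = 0 := z_natle_zero hS h0
        obtain ⟨z, hzY, hzy, hzxx⟩ := hY.directed y hy (inv x * x) (hixxY x hx)
        obtain ⟨u, hu, hzu⟩ := hzxx
        have hz' : inv x * (x * z) = z := by
          rw [hzu]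
          calc inv x * (x * (inv x * x * u)) = ((inv x * x) * (inv x * x)) * u := by
                simp only [mul_assoc]
            _ = (inv x * x) * u := by rw [z_idem_inv_mul hS x]
        have hxz : natle (x * z) (x * y) := z_natle_mul hS (z_natle_refl hS x) hzy
        rw [hxy0] at hxz
        have hxz0 : x * z = 0 := z_natle_zero hS hxz
        have hz0 : z = 0 := by rw [← hz', hxz0, hS.mul_zero]
        exact hY.zero_not_mem (hz0 ▸ hzY)
    have hXW : X ⊆ upsetZ {w : S | ∃ x ∈ X, ∃ y ∈ Y, w = x * y} := by
      intro x hx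
      have hxe : x * (inv x * x) = x := by rw [← mul_assoc, hS.mul_inv_mul]
      refine ⟨x * (inv x * x), ⟨x, hx, inv x * x, hixxY x hx, rfl⟩, ?_⟩
      rw [hxe]; exact z_natle_refl hS x
    have hWX : upsetZ {w : S | ∃ x ∈ X, ∃ y ∈ Y, w = x * y} = X := hXmax _ hWf hXW
    apply Set.Subset.antisymm _ hEY
    intro a ha
    obtain ⟨x, hx⟩ := hXf.nonempty
    have hxa : x * a ∈ X := by
      rw [← hWX]
      exact ⟨x * a, ⟨x, hx, a, ha, rfl⟩, z_natle_refl hS _⟩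
    refine ⟨inv x * (x * a), ⟨x, hx, x * a, hxa, rfl⟩, ?_⟩
    rw [← mul_assoc]
    exact z_natle_of_left hS (z_idem_inv_mul hS x) a
end

section
/- Let S be an inverse semigroup with zero, X an ultrafilter on S, and s ∈ S with s⁻¹s ∈ X. Then (sX)↑ is an ultrafilter on S. -/
section Aux
variable {S : Type*} [Semigroup S] [Zero S] {inv : S → S} (hS : IsInvSemigroupZ S inv)
include hS
set_option linter.unusedSectionVars false

lemma aux_idem_inv {e : S} (he : IsIdemE e) : inv e = e :=
  (hS.inv_unique e e (by rw [he, he]) (by rw [he, he])).symm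

lemma aux_inv_mul_idem (s : S) : IsIdemE (inv s * s) := by
  show inv s * s * (inv s * s) = inv s * s
  rw [mul_assoc, ← mul_assoc s, hS.mul_inv_mul]

lemma aux_mul_inv_idem (s : S) : IsIdemE (s * inv s) := by
  show s * inv s * (s * inv s) = s * inv s
  rw [mul_assoc, ← mul_assoc (inv s), hS.inv_mul_inv]

lemma aux_idem_mul {e f : S} (he : IsIdemE e) (hf : IsIdemE f) : IsIdemE (e * f) := by
  set x := inv (e * f) with hxdef
  have hx1 : (e * f) * x * (e * f) = e * f := hS.mul_inv_mul _
  have hx2 : x * (e * f) * x = x := hS.inv_mul_inv _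
  have hfxe : IsIdemE (f * x * e) := by
    show f * x * e * (f * x * e) = f * x * e
    calc f * x * e * (f * x * e) = f * (x * (e * f) * x) * e := by
          simp only [mul_assoc]
      _ = f * x * e := by rw [hx2]
  have hinv : f * x * e = x := by
    apply hS.inv_unique (e * f)
    · calc (e * f) * (f * x * e) * (e * f)
          = e * (f * f) * x * (e * e) * f := by simp only [mul_assoc]
        _ = (e * f) * x * (e * f) := by rw [he, hf]; simp only [mul_assoc]
        _ = e * f := hx1
    · calc (f * x * e) * (e * f) * (f * x * e)
          = f * (x * (e * (e * (f * (f * x))))) * e := by simp only [mul_assoc]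
        _ = f * (x * (e * f) * x) * e := by rw [← mul_assoc e e, he, ← mul_assoc f f, hf]; simp only [mul_assoc]
        _ = f * x * e := by rw [hx2]
  have hxidem : IsIdemE x := hinv ▸ hfxe
  have : e * f = inv x := hS.inv_unique x (e * f) hx2 hx1
  rw [this, aux_idem_inv hS hxidem]; exact hxidem

lemma aux_idem_comm {e f : S} (he : IsIdemE e) (hf : IsIdemE f) : e * f = f * e := by
  have h1 := aux_idem_mul hS he hf
  have h2 := aux_idem_mul hS hf he
  have : f * e = inv (e * f) := by
    apply hS.inv_unique
    · calc (e * f) * (f * e) * (e * f) = e * (f * f) * (e * e) * f := by simp only [mul_assoc]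
        _ = (e * f) * (e * f) := by rw [he, hf]; simp only [mul_assoc]
        _ = e * f := h1
    · calc (f * e) * (e * f) * (f * e) = f * (e * e) * (f * f) * e := by simp only [mul_assoc]
        _ = (f * e) * (f * e) := by rw [he, hf]; simp only [mul_assoc]
        _ = f * e := h2
  rw [this, aux_idem_inv hS h1]

lemma aux_natle_refl (s : S) : natle s s :=
  ⟨inv s * s, aux_inv_mul_idem hS s, by rw [← mul_assoc, hS.mul_inv_mul]⟩

lemma aux_natle_trans {a b c : S} (h1 : natle a b) (h2 : natle b c) : natle a c := by
  obtain ⟨e, he, hae⟩ := h1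
  obtain ⟨f, hf, hbf⟩ := h2
  exact ⟨f * e, aux_idem_mul hS hf he, by rw [hae, hbf, mul_assoc]⟩

lemma aux_natle_zero {a : S} (h : natle a (0 : S)) : a = 0 := by
  obtain ⟨u, _, h⟩ := h; rw [h, hS.zero_mul]

lemma aux_mul_natle {a b : S} (r : S) (h : natle a b) : natle (r * a) (r * b) := by
  obtain ⟨e, he, h⟩ := h; exact ⟨e, he, by rw [h, mul_assoc]⟩

lemma aux_idem_mul_natle {e : S} (he : IsIdemE e) (x : S) : natle (e * x) x := by
  refine ⟨inv x * (e * x), ?_, ?_⟩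
  · show inv x * (e * x) * (inv x * (e * x)) = inv x * (e * x)
    have hc : e * (x * inv x) = (x * inv x) * e := aux_idem_comm hS he (aux_mul_inv_idem hS x)
    calc inv x * (e * x) * (inv x * (e * x))
        = inv x * (e * (x * inv x)) * (e * x) := by simp only [mul_assoc]
      _ = inv x * ((x * inv x) * e) * (e * x) := by rw [hc]
      _ = (inv x * x * inv x) * (e * e) * x := by simp only [mul_assoc]
      _ = inv x * (e * x) := by rw [hS.inv_mul_inv, he, mul_assoc]
  · have hc : e * (x * inv x) = (x * inv x) * e := aux_idem_comm hS he (aux_mul_inv_idem hS x)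
    calc e * x = e * (x * inv x * x) := by rw [hS.mul_inv_mul]
      _ = (x * inv x) * e * x := by rw [← mul_assoc, ← hc]
      _ = x * (inv x * (e * x)) := by simp only [mul_assoc]

lemma aux_le_mul_cancel {z t : S} (h : natle z t) : t * inv t * z = z := by
  obtain ⟨e, _, h⟩ := h
  rw [h, ← mul_assoc, hS.mul_inv_mul]

end Aux
theorem upset_smul_ultrafilter
    {S : Type*} [Semigroup S] [Zero S]
    (inv : S → S) (hS : IsInvSemigroupZ S inv)
    {X : Set S} (hX : IsUltraZ X) {s : S} (hs : inv s * s ∈ X) :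
    IsUltraZ (upsetZ ((fun x => s * x) '' X)) := by
  obtain ⟨hXf, hXmax⟩ := hX
  set T : Set S := upsetZ ((fun x => s * x) '' X) with hT
  -- `s ∈ T`
  have hsT : s ∈ T := by
    refine ⟨s * (inv s * s), ⟨inv s * s, hs, rfl⟩, ?_⟩
    rw [← mul_assoc, hS.mul_inv_mul]
    exact aux_natle_refl hS s
  have hTfilter : IsFilterZ T := by
    constructor
    · exact ⟨s, hsT⟩
    · rintro a ⟨-, ⟨x, hx, rfl⟩, hxa⟩ b ⟨-, ⟨y, hy, rfl⟩, hyb⟩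
      obtain ⟨z, hz, hzx, hzy⟩ := hXf.directed x hx y hy
      refine ⟨s * z, ⟨s * z, ⟨z, hz, rfl⟩, aux_natle_refl hS _⟩, ?_, ?_⟩
      · exact aux_natle_trans hS (aux_mul_natle hS s hzx) hxa
      · exact aux_natle_trans hS (aux_mul_natle hS s hzy) hyb
    · rintro a ⟨w, hw, hwa⟩ b hab
      exact ⟨w, hw, aux_natle_trans hS hwa hab⟩
    · rintro ⟨-, ⟨x, hx, rfl⟩, hx0⟩
      have hsx : s * x = 0 := aux_natle_zero hS hx0
      obtain ⟨z, hz, hzx, hzs⟩ := hXf.directed x hx (inv s * s) hs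
      -- z ≤ x gives s*z = 0 ; z ≤ s⁻¹s gives z = s⁻¹ (s z)
      obtain ⟨e, _, hze⟩ := hzx
      have hsz : s * z = 0 := by rw [hze, ← mul_assoc, hsx, hS.zero_mul]
      obtain ⟨u, _, hzu⟩ := hzs
      have : z = inv s * (s * z) := by
        conv_rhs => rw [hzu]
        simp only [← mul_assoc]
        rw [hS.inv_mul_inv, ← hzu]
      rw [hsz, hS.mul_zero] at this
      exact hXf.zero_not_mem (this ▸ hz)
  refine ⟨hTfilter, ?_⟩
  intro Y hY hTY
  have hsY : s ∈ Y := hTY hsT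
  set X' : Set S := upsetZ ((fun y => inv s * y) '' Y) with hX'
  have hXX' : X ⊆ X' := by
    intro x hx
    have hsxY : s * x ∈ Y := hTY ⟨s * x, ⟨x, hx, rfl⟩, aux_natle_refl hS _⟩
    refine ⟨inv s * (s * x), ⟨s * x, hsxY, rfl⟩, ?_⟩
    rw [← mul_assoc]
    exact aux_idem_mul_natle hS (aux_inv_mul_idem hS s) x
  have hX'filter : IsFilterZ X' := by
    constructor
    · obtain ⟨x, hx⟩ := hXf.nonempty; exact ⟨x, hXX' hx⟩
    · rintro a ⟨-, ⟨y1, hy1, rfl⟩, h1a⟩ b ⟨-, ⟨y2, hy2, rfl⟩, h2b⟩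
      obtain ⟨z, hz, hz1, hz2⟩ := hY.directed y1 hy1 y2 hy2
      refine ⟨inv s * z, ⟨inv s * z, ⟨z, hz, rfl⟩, aux_natle_refl hS _⟩, ?_, ?_⟩
      · exact aux_natle_trans hS (aux_mul_natle hS (inv s) hz1) h1a
      · exact aux_natle_trans hS (aux_mul_natle hS (inv s) hz2) h2b
    · rintro a ⟨w, hw, hwa⟩ b hab
      exact ⟨w, hw, aux_natle_trans hS hwa hab⟩
    · rintro ⟨-, ⟨y, hy, rfl⟩, hy0⟩
      have hsy : inv s * y = 0 := aux_natle_zero hS hy0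
      obtain ⟨z, hz, hzy, hzs⟩ := hY.directed y hy s hsY
      obtain ⟨e, _, hze⟩ := hzy
      have hsz : inv s * z = 0 := by rw [hze, ← mul_assoc, hsy, hS.zero_mul]
      have hz' : z = s * (inv s * z) := by
        rw [← mul_assoc, aux_le_mul_cancel hS hzs]
      rw [hsz, hS.mul_zero] at hz'
      exact hY.zero_not_mem (hz' ▸ hz)
  have hX'X : X' = X := hXmax X' hX'filter hXX'
  apply Set.Subset.antisymm _ hTY
  intro y hy
  obtain ⟨z, hz, hzy, hzs⟩ := hY.directed y hy s hsY
  have hzX : inv s * z ∈ X := by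
    rw [← hX'X]
    exact ⟨inv s * z, ⟨z, hz, rfl⟩, aux_natle_refl hS _⟩
  have hz' : s * (inv s * z) = z := by
    rw [← mul_assoc, aux_le_mul_cancel hS hzs]
  exact ⟨z, ⟨inv s * z, hzX, hz'⟩, hzy⟩
end

section
/- Let X be a Γ-graded set with |X| ≥ 3, and let I^gr(X) be the graded symmetric inverse monoid. If every pair of compatible elements of I^gr(X) has a join in I^gr(X), then the grading on X is trivial (all elements of X have the same degree). -/
/-- A subset of `X × X` is (the graph of) a partial bijection of `X`:
pairs `(a, b)` with `b` the image of `a`. -/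
def IsPBij {X : Type*} (R : Set (X × X)) : Prop :=
  (∀ p ∈ R, ∀ q ∈ R, p.1 = q.1 → p.2 = q.2) ∧
  (∀ p ∈ R, ∀ q ∈ R, p.2 = q.2 → p.1 = q.1)

/-- Composition of partial bijections (as graphs): apply `T` first, then `R`. -/
def pcomp {X : Type*} (R T : Set (X × X)) : Set (X × X) :=
  {p : X × X | ∃ b : X, (p.1, b) ∈ T ∧ (b, p.2) ∈ R}

/-- The inverse of a partial bijection (as a graph). -/
def pswap {X : Type*} (R : Set (X × X)) : Set (X × X) := {p : X × X | (p.2, p.1) ∈ R}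

/-- The graded symmetric inverse monoid `I^gr(X)` of a `Γ`-graded set `X` (graded via `φ`):
partial bijections that shift degrees uniformly by some `α ∈ Γ` on the left. -/
def IGr {X Γ : Type*} [Group Γ] (φ : X → Γ) : Set (Set (X × X)) :=
  {R : Set (X × X) | IsPBij R ∧ ∃ α : Γ, ∀ p ∈ R, φ p.2 = α * φ p.1}

/-- The natural partial order on `I^gr(X)`: `A ≤ B` iff `A = B ∘ E` for an idempotent
`E ∈ I^gr(X)`. -/
def pnatle {X Γ : Type*} [Group Γ] (φ : X → Γ) (A B : Set (X × X)) : Prop :=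
  ∃ E ∈ IGr φ, pcomp E E = E ∧ A = pcomp B E

/-- Compatibility in `I^gr(X)`: `R⁻¹T` and `RT⁻¹` are idempotent. -/
def pCompat {X : Type*} (R T : Set (X × X)) : Prop :=
  pcomp (pcomp (pswap R) T) (pcomp (pswap R) T) = pcomp (pswap R) T ∧
  pcomp (pcomp R (pswap T)) (pcomp R (pswap T)) = pcomp R (pswap T)

/-- `J` is the join of `R` and `T` inside `I^gr(X)`. -/
def pIsJoin {X Γ : Type*} [Group Γ] (φ : X → Γ) (R T J : Set (X × X)) : Prop :=
  pnatle φ R J ∧ pnatle φ T J ∧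
    ∀ U ∈ IGr φ, pnatle φ R U → pnatle φ T U → pnatle φ J U

lemma pcomp_empty_empty {X : Type*} : pcomp (∅ : Set (X × X)) ∅ = ∅ := by
  ext p; simp [pcomp]

lemma idem_deg {X Γ : Type*} [Group Γ] (φ : X → Γ) {E : Set (X × X)}
    (hE : E ∈ IGr φ) (hidem : pcomp E E = E) {x u : X} (hxu : (x, u) ∈ E) :
    φ u = φ x := by
  obtain ⟨hbij, α, hα⟩ := hE
  have hmem : (x, u) ∈ pcomp E E := by rw [hidem]; exact hxu
  obtain ⟨d, hxd, hdu⟩ := hmem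
  have hdb : d = u := hbij.1 (x, d) hxd (x, u) hxu rfl
  rw [hdb] at hdu
  have h1 : φ u = α * φ u := hα (u, u) hdu
  have h2 : φ u = α * φ x := hα (x, u) hxu
  have hα1 : α = 1 := by
    have := h1.symm.trans (one_mul (φ u)).symm
    exact mul_right_cancel this
  rw [hα1, one_mul] at h2
  exact h2

lemma key_step {X Γ : Type*} [Group Γ] (φ : X → Γ)
    (hjoin : ∀ R ∈ IGr φ, ∀ T ∈ IGr φ, pCompat R T →
      ∃ J ∈ IGr φ, pIsJoin φ R T J)
    (x y z : X) (hzx : z ≠ x) (hzy : z ≠ y) : φ x = φ y := by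
  set R : Set (X × X) := {(x, y)} with hRdef
  set T : Set (X × X) := {(z, z)} with hTdef
  have hR : R ∈ IGr φ := by
    refine ⟨⟨?_, ?_⟩, φ y * (φ x)⁻¹, ?_⟩
    · rintro p hp q hq _
      simp only [hRdef, Set.mem_singleton_iff] at hp hq
      rw [hp, hq]
    · rintro p hp q hq _
      simp only [hRdef, Set.mem_singleton_iff] at hp hq
      rw [hp, hq]
    · rintro p hp
      simp only [hRdef, Set.mem_singleton_iff] at hp
      rw [hp]; group
  have hT : T ∈ IGr φ := by
    refine ⟨⟨?_, ?_⟩, 1, ?_⟩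
    · rintro p hp q hq _
      simp only [hTdef, Set.mem_singleton_iff] at hp hq
      rw [hp, hq]
    · rintro p hp q hq _
      simp only [hTdef, Set.mem_singleton_iff] at hp hq
      rw [hp, hq]
    · rintro p hp
      simp only [hTdef, Set.mem_singleton_iff] at hp
      rw [hp]; simp
  have hS1 : pcomp (pswap R) T = ∅ := by
    ext p
    simp only [pcomp, pswap, hRdef, hTdef, Set.mem_setOf_eq, Set.mem_singleton_iff,
      Prod.mk.injEq, Set.mem_empty_iff_false, iff_false, not_exists]
    rintro d ⟨⟨h1, h2⟩, h3, h4⟩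
    exact hzy (h2 ▸ h4.symm ▸ rfl)
  have hS2 : pcomp R (pswap T) = ∅ := by
    ext p
    simp only [pcomp, pswap, hRdef, hTdef, Set.mem_setOf_eq, Set.mem_singleton_iff,
      Prod.mk.injEq, Set.mem_empty_iff_false, iff_false, not_exists]
    rintro d ⟨⟨h1, h2⟩, h3, h4⟩
    exact hzx (h1 ▸ h3.symm ▸ rfl)
  have hcompat : pCompat R T := by
    constructor
    · rw [hS1]; exact pcomp_empty_empty
    · rw [hS2]; exact pcomp_empty_empty
  obtain ⟨J, hJ, ⟨E, hE, hEidem, hRE⟩, ⟨F, hF, hFidem, hTF⟩, -⟩ :=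
    hjoin R hR T hT hcompat
  obtain ⟨hJbij, α, hα⟩ := hJ
  have hxyR : (x, y) ∈ pcomp J E := by rw [← hRE]; exact rfl
  obtain ⟨u, hxu, huy⟩ := hxyR
  have hzzT : (z, z) ∈ pcomp J F := by rw [← hTF]; exact rfl
  obtain ⟨v, hzv, hvz⟩ := hzzT
  have hux : φ u = φ x := idem_deg φ hE hEidem hxu
  have hvz' : φ v = φ z := idem_deg φ hF hFidem hzv
  have h1 : φ y = α * φ u := hα (u, y) huy
  have h2 : φ z = α * φ v := hα (v, z) hvz
  rw [hvz'] at h2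
  have hα1 : α = 1 := by
    have := h2.symm.trans (one_mul (φ z)).symm
    exact mul_right_cancel this
  rw [hα1, one_mul, hux] at h1
  exact h1.symm

theorem compatible_joins_imply_trivial_grading
    {X Γ : Type*} [Group Γ] (φ : X → Γ)
    (a b c : X) (hab : a ≠ b) (hac : a ≠ c) (hbc : b ≠ c)
    (hjoin : ∀ R ∈ IGr φ, ∀ T ∈ IGr φ, pCompat R T →
      ∃ J ∈ IGr φ, pIsJoin φ R T J) :
    ∀ x y : X, φ x = φ y := by
  intro x y
  by_cases hax : a ≠ x ∧ a ≠ y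
  · exact key_step φ hjoin x y a hax.1 hax.2
  · by_cases hbx : b ≠ x ∧ b ≠ y
    · exact key_step φ hjoin x y b hbx.1 hbx.2
    · push_neg at hax hbx
      have hc : c ≠ x ∧ c ≠ y := by
        by_cases ha : a = x
        · subst ha
          have hb : b = y := hbx (Ne.symm hab)
          subst hb
          exact ⟨fun h => hac h.symm, fun h => hbc h.symm⟩
        · have ha' : a = y := hax ha
          subst ha'
          have hb : b = x := by
            by_cases hb' : b = x
            · exact hb'
            · exact absurd (hbx hb') (Ne.symm hab)
          subst hb
          exact ⟨fun h => hbc h.symm, fun h => hac h.symm⟩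
      exact key_step φ hjoin x y c hc.1 hc.2
end

section
/- Let 𝒢 be a Γ-graded Hausdorff ample groupoid, and for y ∈ 𝒢 let 𝒳_y := {Y ∈ S^gr(𝒢) : y ∈ Y} be the set of homogeneous compact slices containing y. Then 𝒳_y is an ultrafilter on the inverse semigroup S^gr(𝒢) (with respect to the natural partial order, which is set inclusion), and 𝒳_x = 𝒳_y implies x = y for all x, y ∈ 𝒢. -/
/-- A `Γ`-graded topological groupoid on the morphism set `G`. Composition is encoded by a
total map `mul` whose value is only meaningful on composable pairs, i.e. pairs `(x, y)` with
`d x = r y`, where `d x = x⁻¹x` and `r x = xx⁻¹`. -/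
structure GrGroupoid (G : Type*) (Γ : Type*) [TopologicalSpace G] [Group Γ] where
  inv : G → G
  mul : G → G → G
  deg : G → Γ
  inv_inv : ∀ x : G, inv (inv x) = x
  mul_d : ∀ x : G, mul x (mul (inv x) x) = x
  r_mul : ∀ x : G, mul (mul x (inv x)) x = x
  assoc : ∀ x y z : G, mul (inv x) x = mul y (inv y) → mul (inv y) y = mul z (inv z) →
    mul (mul x y) z = mul x (mul y z)
  inv_mul : ∀ x y : G, mul (inv x) x = mul y (inv y) → inv (mul x y) = mul (inv y) (inv x)
  d_mul : ∀ x y : G, mul (inv x) x = mul y (inv y) →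
    mul (inv (mul x y)) (mul x y) = mul (inv y) y
  mul_r : ∀ x y : G, mul (inv x) x = mul y (inv y) →
    mul (mul x y) (inv (mul x y)) = mul x (inv x)
  cont_inv : Continuous inv
  cont_mul : ContinuousOn (fun p : G × G => mul p.1 p.2)
    {p : G × G | mul (inv p.1) p.1 = mul p.2 (inv p.2)}
  deg_mul : ∀ x y : G, mul (inv x) x = mul y (inv y) → deg (mul x y) = deg x * deg y
  isOpen_deg : ∀ α : Γ, IsOpen {x : G | deg x = α}

variable {G Γ : Type*} [TopologicalSpace G] [Group Γ]

/-- The domain map. -/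
def Gd (𝔊 : GrGroupoid G Γ) (x : G) : G := 𝔊.mul (𝔊.inv x) x

/-- The range map. -/
def Gr (𝔊 : GrGroupoid G Γ) (x : G) : G := 𝔊.mul x (𝔊.inv x)

/-- A slice (local bisection): an open set on which `d` and `r` are injective. -/
def IsSlice (𝔊 : GrGroupoid G Γ) (X : Set G) : Prop :=
  IsOpen X ∧ Set.InjOn (Gd 𝔊) X ∧ Set.InjOn (Gr 𝔊) X

/-- A compact slice. -/
def IsCompactSlice (𝔊 : GrGroupoid G Γ) (X : Set G) : Prop :=
  IsSlice 𝔊 X ∧ IsCompact X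

/-- A homogeneous compact slice: contained in a single graded component. -/
def IsHomSlice (𝔊 : GrGroupoid G Γ) (X : Set G) : Prop :=
  IsCompactSlice 𝔊 X ∧ ∃ α : Γ, ∀ x ∈ X, 𝔊.deg x = α

/-- The groupoid is ample: compact slices form a base for the topology. -/
def IsAmple (𝔊 : GrGroupoid G Γ) : Prop :=
  TopologicalSpace.IsTopologicalBasis {X : Set G | IsCompactSlice 𝔊 X}

/-- Setwise product `XY = {xy : x ∈ X, y ∈ Y, d x = r y}`. -/
def sProd (𝔊 : GrGroupoid G Γ) (X Y : Set G) : Set G :=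
  {z : G | ∃ x ∈ X, ∃ y ∈ Y, Gd 𝔊 x = Gr 𝔊 y ∧ z = 𝔊.mul x y}

/-- Setwise inverse `X⁻¹`. -/
def sInv (𝔊 : GrGroupoid G Γ) (X : Set G) : Set G := 𝔊.inv '' X

/-- A filter in the poset (under inclusion) of homogeneous compact slices. -/
structure SliceFilter (𝔊 : GrGroupoid G Γ) (F : Set (Set G)) : Prop where
  sub : ∀ A ∈ F, IsHomSlice 𝔊 A
  nonempty : F.Nonempty
  directed : ∀ A ∈ F, ∀ B ∈ F, ∃ Z ∈ F, Z ⊆ A ∧ Z ⊆ B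
  upward : ∀ A ∈ F, ∀ B : Set G, IsHomSlice 𝔊 B → A ⊆ B → B ∈ F
  empty_not_mem : (∅ : Set G) ∉ F

/-- An ultrafilter: a maximal filter of homogeneous compact slices. -/
def SliceUltra (𝔊 : GrGroupoid G Γ) (F : Set (Set G)) : Prop :=
  SliceFilter 𝔊 F ∧ ∀ F' : Set (Set G), SliceFilter 𝔊 F' → F ⊆ F' → F' = F

/-- In an ample groupoid, every open neighbourhood contains a homogeneous compact slice
around the point. -/
lemma exists_homSlice_mem {G Γ : Type*} [TopologicalSpace G] [Group Γ]
    (𝔊 : GrGroupoid G Γ) (hample : IsAmple 𝔊) {U : Set G} (hU : IsOpen U) {y : G}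
    (hy : y ∈ U) : ∃ Z : Set G, IsHomSlice 𝔊 Z ∧ y ∈ Z ∧ Z ⊆ U := by
  have hV : IsOpen (U ∩ {x : G | 𝔊.deg x = 𝔊.deg y}) := hU.inter (𝔊.isOpen_deg (𝔊.deg y))
  obtain ⟨Z, hZb, hyZ, hZV⟩ := hample.exists_subset_of_mem_open (Set.mem_inter hy (show 𝔊.deg y = 𝔊.deg y from rfl)) hV
  exact ⟨Z, ⟨hZb, 𝔊.deg y, fun x hx => (hZV hx).2⟩, hyZ, fun x hx => (hZV hx).1⟩

theorem point_slices_ultrafilter_and_injective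
    {G Γ : Type*} [TopologicalSpace G] [T2Space G] [Group Γ]
    (𝔊 : GrGroupoid G Γ) (hample : IsAmple 𝔊) :
    (∀ y : G, SliceUltra 𝔊 {Y : Set G | IsHomSlice 𝔊 Y ∧ y ∈ Y}) ∧
    (∀ x y : G,
      {Y : Set G | IsHomSlice 𝔊 Y ∧ x ∈ Y} = {Y : Set G | IsHomSlice 𝔊 Y ∧ y ∈ Y} →
      x = y) := by
  have hfil : ∀ y : G, SliceFilter 𝔊 {Y : Set G | IsHomSlice 𝔊 Y ∧ y ∈ Y} := by
    intro y
    refine ⟨fun A hA => hA.1, ?_, ?_, ?_, ?_⟩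
    · obtain ⟨Z, hZ, hyZ, _⟩ := exists_homSlice_mem 𝔊 hample isOpen_univ (Set.mem_univ y)
      exact ⟨Z, hZ, hyZ⟩
    · rintro A ⟨hA, hyA⟩ B ⟨hB, hyB⟩
      obtain ⟨Z, hZ, hyZ, hZAB⟩ := exists_homSlice_mem 𝔊 hample
        (hA.1.1.1.inter hB.1.1.1) ⟨hyA, hyB⟩
      exact ⟨Z, ⟨hZ, hyZ⟩, fun x hx => (hZAB hx).1, fun x hx => (hZAB hx).2⟩
    · rintro A ⟨_, hyA⟩ B hB hAB
      exact ⟨hB, hAB hyA⟩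
    · rintro ⟨_, h⟩; exact h
  constructor
  · intro y
    refine ⟨hfil y, fun F' hF' hsub => ?_⟩
    ext A
    refine ⟨fun hA => ⟨hF'.sub A hA, ?_⟩, fun hA => hsub hA⟩
    by_contra hyA
    -- A is compact, hence closed; y is in the open complement
    have hAcl : IsClosed A := (hF'.sub A hA).1.2.isClosed
    obtain ⟨C, hC, hyC, hCA⟩ := exists_homSlice_mem 𝔊 hample hAcl.isOpen_compl hyA
    have hCF' : C ∈ F' := hsub ⟨hC, hyC⟩
    obtain ⟨Z, hZF', hZA, hZC⟩ := hF'.directed A hA C hCF'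
    have : Z = ∅ := by
      ext z
      simp only [Set.mem_empty_iff_false, iff_false]
      exact fun hz => hCA (hZC hz) (hZA hz)
    exact hF'.empty_not_mem (this ▸ hZF')
  · intro x y h
    by_contra hxy
    obtain ⟨U, V, hU, _, hxU, hyV, hUV⟩ := t2_separation hxy
    obtain ⟨Z, hZ, hxZ, hZU⟩ := exists_homSlice_mem 𝔊 hample hU hxU
    have : Z ∈ {Y : Set G | IsHomSlice 𝔊 Y ∧ y ∈ Y} := h ▸ ⟨hZ, hxZ⟩
    exact hUV.le_bot ⟨hZU this.2, hyV⟩ |>.elim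
end
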